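/- arXiv:2604.00277 — 4 statements merged into one kernel-verified Lean document; each statement's English description precedes it below -/
import Mathlib

section
/- Let F : ℝ^N → ℝ be convex and continuously differentiable with gradient Ψ = ∇F, and let W be a symmetric N×N real matrix. Define the energy E(x) = -(1/2)·Ψ(x)ᵀ W Ψ(x) + xᵀ Ψ(x) - F(x). Then at every point x where Ψ is differentiable (with derivative DΨ(x)), the gradient of E satisfies ∇E(x) = -DΨ(x)·f(x), where f(x) = -x + W Ψ(x). -/
/-!
Differentiate the energy term by term. The terms `⟪v, Ψ x⟫` coming from `⟪x, Ψ x⟫` and from `-F`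
cancel because `Ψ = ∇F`; symmetry of `W` merges the two halves of the quadratic term into
`-⟪D v, W (Ψ x)⟫`; and since `D` is the Hessian of `F`, it is symmetric (Schwarz), so what remains,
`⟪D v, x - W (Ψ x)⟫`, equals `⟪-D (f x), v⟫`.
-/

open InnerProductSpace

abbrev Euc (N : ℕ) : Type := EuclideanSpace ℝ (Fin N)

section

variable {E : Type*} [NormedAddCommGroup E] [InnerProductSpace ℝ E] [CompleteSpace E]

theorem isSymmetric_fderiv_of_hasGradientAt {F : E → ℝ} {Ψ : E → E} {D : E →L[ℝ] E} {x : E}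
    (hF : ∀ y, HasGradientAt F (Ψ y) y) (hD : HasFDerivAt Ψ D x) :
    (D : E →ₗ[ℝ] E).IsSymmetric :=
  fun v w => (second_derivative_symmetric (fun y => (hF y).hasFDerivAt)
    ((innerSL ℝ).hasFDerivAt.comp x hD) v w).trans (real_inner_comm _ _)

noncomputable def ebmEnergy (F : E → ℝ) (Ψ : E → E) (W : E →L[ℝ] E) (x : E) : ℝ :=
  -(1 / 2) * ⟪Ψ x, W (Ψ x)⟫_ℝ + ⟪x, Ψ x⟫_ℝ - F x

theorem hasGradientAt_ebmEnergy {F : E → ℝ} {Ψ : E → E} {W D : E →L[ℝ] E} {x : E}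
    (hF : ∀ y, HasGradientAt F (Ψ y) y) (hW : (W : E →ₗ[ℝ] E).IsSymmetric)
    (hD : HasFDerivAt Ψ D x) :
    HasGradientAt (ebmEnergy F Ψ W) (-D (-x + W (Ψ x))) x := by
  have hDsymm := isSymmetric_fderiv_of_hasGradientAt hF hD
  have hE := (((hD.inner ℝ (W.hasFDerivAt.comp x hD)).const_mul (-(1 / 2 : ℝ))).add
    ((hasFDerivAt_id x).inner ℝ hD)).sub (hF x).hasFDerivAt
  refine hasGradientAt_iff_hasFDerivAt.2 (hE.congr_fderiv ?_)
  ext v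
  rw [toDual_apply_apply]
  simp only [Function.comp_apply, id_eq, sub_apply, add_apply, smul_apply,
    ContinuousLinearMap.comp_apply, ContinuousLinearMap.prod_apply, fderivInnerCLM_apply,
    ContinuousLinearMap.id_apply, toDual_apply_apply, smul_eq_mul, map_add, map_neg,
    inner_add_left, inner_neg_left]
  have hWΨ : ⟪Ψ x, W (D v)⟫_ℝ = ⟪W (Ψ x), D v⟫_ℝ := (hW _ _).symm
  have hDW : ⟪D (W (Ψ x)), v⟫_ℝ = ⟪W (Ψ x), D v⟫_ℝ := hDsymm _ _
  have hDx : ⟪D x, v⟫_ℝ = ⟪x, D v⟫_ℝ := hDsymm _ _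
  rw [hWΨ, hDW, hDx, real_inner_comm (D v), real_inner_comm v]
  ring

end

theorem stmt_0_general {N : ℕ}
    (F : Euc N → ℝ) (Ψ : Euc N → Euc N)
    (W : Euc N →L[ℝ] Euc N)
    (hΨgrad : ∀ x, HasGradientAt F (Ψ x) x)
    (hWsymm : ∀ u v : Euc N, (inner ℝ (W u) v : ℝ) = inner ℝ u (W v))
    (Energy : Euc N → ℝ)
    (hE : ∀ x, Energy x =
      -(1/2) * (inner ℝ (Ψ x) (W (Ψ x)) : ℝ) + (inner ℝ x (Ψ x) : ℝ) - F x)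
    (f : Euc N → Euc N)
    (hf : ∀ x, f x = -x + W (Ψ x))
    (x : Euc N) (D : Euc N →L[ℝ] Euc N)
    (hD : HasFDerivAt Ψ D x) :
    HasGradientAt Energy (-(D (f x))) x := by
  rw [show Energy = ebmEnergy F Ψ W from funext hE, hf]
  exact hasGradientAt_ebmEnergy hΨgrad hWsymm hD

/-- for an EBM with convex `C¹` primitive `F`, gradient activation
`Ψ = ∇F`, symmetric `W`, energy `E(x) = -(1/2)⟪Ψ x, W Ψ x⟫ + ⟪x, Ψ x⟫ - F x` and
vector field `f(x) = -x + W Ψ x`, at any point where `Ψ` has derivative `D`, the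
gradient of the energy is `∇E(x) = -D (f x)`. -/
theorem stmt_0 {N : ℕ}
    (F : Euc N → ℝ) (Ψ : Euc N → Euc N)
    (W : Euc N →L[ℝ] Euc N)
    (hconv : ConvexOn ℝ Set.univ F)
    (hΨgrad : ∀ x, HasGradientAt F (Ψ x) x)
    (hΨcont : Continuous Ψ)
    (hWsymm : ∀ u v : Euc N, (inner ℝ (W u) v : ℝ) = inner ℝ u (W v))
    (Energy : Euc N → ℝ)
    (hE : ∀ x, Energy x =
      -(1/2) * (inner ℝ (Ψ x) (W (Ψ x)) : ℝ) + (inner ℝ x (Ψ x) : ℝ) - F x)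
    (f : Euc N → Euc N)
    (hf : ∀ x, f x = -x + W (Ψ x))
    (x : Euc N) (D : Euc N →L[ℝ] Euc N)
    (hD : HasFDerivAt Ψ D x) :
    HasGradientAt Energy (-(D (f x))) x :=
  stmt_0_general F Ψ W hΨgrad hWsymm Energy hE f hf x D hD
end

section
/- Let F : ℝ^N → ℝ be convex C¹ with growth F(x) ~ Θ(‖x‖^q) for some 1 < q < 2, meaning a‖x‖^q ≤ F(x) ≤ b‖x‖^q for large ‖x‖ and moreover ‖∇F(x)‖ ≤ C‖x‖^{q-1} for large ‖x‖. Let W be symmetric with no constraint on its eigenvalues. Then the energy E(x) = -(1/2)Ψ(x)ᵀWΨ(x) + xᵀΨ(x) - F(x), with Ψ = ∇F, is radially unbounded: E(x) → +∞ as ‖x‖ → ∞. -/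
open Filter Set Topology

theorem exists_pos_lt_one_mul_rpow_lt {a p : ℝ} (b : ℝ) (ha : 0 < a) (hp : 0 < p) :
    ∃ t : ℝ, 0 < t ∧ t < 1 ∧ b * t ^ p < a := by
  have hlim : Tendsto (fun t : ℝ => b * t ^ p) (𝓝[>] 0) (𝓝 0) := by
    simpa [Real.zero_rpow hp.ne'] using
      ((Real.continuousAt_rpow_const 0 p (Or.inr hp.le)).tendsto.const_mul b).mono_left
        nhdsWithin_le_nhds
  obtain ⟨t, hbt, ht0, ht1⟩ :=
    ((hlim.eventually (gt_mem_nhds ha)).and (Ioo_mem_nhdsGT one_pos)).exists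
  exact ⟨t, ht0, ht1, hbt⟩

theorem tendsto_mul_rpow_sub_mul_rpow_atTop {c p q : ℝ} (d : ℝ) (hc : 0 < c) (hq : 0 < q)
    (hpq : p < q) : Tendsto (fun r : ℝ => c * r ^ q - d * r ^ p) atTop atTop := by
  have hlim : Tendsto (fun r : ℝ => c - d * r ^ (-(q - p))) atTop (𝓝 (c - d * 0)) :=
    ((tendsto_rpow_neg_atTop (sub_pos.2 hpq)).const_mul d).const_sub c
  rw [mul_zero, sub_zero] at hlim
  refine ((tendsto_rpow_atTop hq).atTop_mul_pos hc hlim).congr' ?_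
  filter_upwards [eventually_gt_atTop 0] with r hr
  rw [mul_sub, neg_sub, Real.rpow_sub hr]
  field_simp

theorem tendsto_comap_norm_smul {E : Type*} [NormedAddCommGroup E] [NormedSpace ℝ E] {c : ℝ}
    (hc : 0 < c) :
    Tendsto (c • · : E → E) (comap norm atTop) (comap norm atTop) := by
  refine tendsto_comap_iff.2 ?_
  simpa [Function.comp_def, norm_smul, abs_of_pos hc] using
    (tendsto_comap (f := (norm : E → ℝ))).const_mul_atTop hc

section

variable {E : Type*} [NormedAddCommGroup E] [InnerProductSpace ℝ E]

theorem ContinuousLinearMap.inner_apply_self_le_of_norm_le (W : E →L[ℝ] E) {v : E} {s : ℝ}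
    (hv : ‖v‖ ≤ s) : inner ℝ v (W v) ≤ ‖W‖ * s ^ 2 :=
  calc inner ℝ v (W v) ≤ ‖v‖ * (‖W‖ * ‖v‖) :=
        (real_inner_le_norm _ _).trans (by gcongr; exact W.le_opNorm v)
    _ = ‖W‖ * ‖v‖ ^ 2 := by ring
    _ ≤ ‖W‖ * s ^ 2 := by gcongr

variable [CompleteSpace E]

theorem ConvexOn.add_inner_sub_le_of_hasGradientAt {f : E → ℝ} {g x : E}
    (hf : ConvexOn ℝ univ f) (hx : HasGradientAt f g x) (y : E) :
    f x + inner ℝ g (y - x) ≤ f y := by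
  let L : ℝ →ᵃ[ℝ] E := AffineMap.lineMap x y
  have hL : HasDerivAt (f ∘ L) (inner ℝ g (y - x)) 0 := by
    have hline : HasDerivAt L (y - x) 0 := by
      simpa using AffineMap.hasDerivAt_lineMap (a := x) (b := y) (x := (0 : ℝ))
    simpa [L] using hx.hasFDerivAt.comp_hasDerivAt_of_eq 0 hline (by simp [L])
  have hslope := (hf.comp_affineMap L).le_slope_of_hasDerivAt (mem_univ 0) (mem_univ 1)
    one_pos hL
  simp only [slope_def_field, Function.comp_apply, AffineMap.lineMap_apply_one,
    AffineMap.lineMap_apply_zero, sub_zero, div_one, L] at hslope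
  linarith

theorem ConvexOn.sub_div_le_inner_sub_of_hasGradientAt {f : E → ℝ} {g x : E}
    (hf : ConvexOn ℝ univ f) (hx : HasGradientAt f g x) {t : ℝ} (ht : t < 1) :
    (t * f x - f (t • x)) / (1 - t) ≤ inner ℝ x g - f x := by
  have h := hf.add_inner_sub_le_of_hasGradientAt hx (t • x)
  rw [inner_sub_right, real_inner_smul_right, real_inner_comm] at h
  rw [div_le_iff₀ (sub_pos.2 ht)]
  linarith

theorem ConvexOn.exists_eventually_mul_rpow_le_inner_sub {f : E → ℝ} {g : E → E}
    (hf : ConvexOn ℝ univ f) (hg : ∀ x, HasGradientAt f (g x) x) {a b q : ℝ} (ha : 0 < a)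
    (hq : 1 < q) (hlow : ∀ᶠ x in comap norm atTop, a * ‖x‖ ^ q ≤ f x)
    (hup : ∀ᶠ x in comap norm atTop, f x ≤ b * ‖x‖ ^ q) :
    ∃ c > 0, ∀ᶠ x in comap norm atTop, c * ‖x‖ ^ q ≤ inner ℝ x (g x) - f x := by
  obtain ⟨t, ht0, ht1, hbt⟩ := exists_pos_lt_one_mul_rpow_lt b ha (sub_pos.2 hq)
  refine ⟨t * (a - b * t ^ (q - 1)) / (1 - t),
    div_pos (mul_pos ht0 (sub_pos.2 hbt)) (sub_pos.2 ht1), ?_⟩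
  filter_upwards [hlow, (tendsto_comap_norm_smul ht0).eventually hup] with x hx htx
  have htq : t ^ q = t * t ^ (q - 1) := by
    rw [Real.rpow_sub_one ht0.ne', mul_div_cancel₀ _ ht0.ne']
  rw [norm_smul, Real.norm_of_nonneg ht0.le, Real.mul_rpow ht0.le (norm_nonneg x), htq] at htx
  calc t * (a - b * t ^ (q - 1)) / (1 - t) * ‖x‖ ^ q
      = (t * (a * ‖x‖ ^ q) - b * (t * t ^ (q - 1) * ‖x‖ ^ q)) / (1 - t) := by ring
    _ ≤ (t * f x - f (t • x)) / (1 - t) := by gcongr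
    _ ≤ inner ℝ x (g x) - f x := hf.sub_div_le_inner_sub_of_hasGradientAt (hg x) ht1

end

theorem stmt_4_general {N : ℕ}
    (F : Euc N → ℝ) (Ψ : Euc N → Euc N)
    (W : Euc N →L[ℝ] Euc N)
    (hconv : ConvexOn ℝ Set.univ F)
    (hΨgrad : ∀ x, HasGradientAt F (Ψ x) x)
    (a b C q : ℝ) (ha : 0 < a)
    (hq1 : 1 < q) (hq2 : q < 2)
    (R₀ : ℝ)
    (hgrowth : ∀ x : Euc N, R₀ ≤ ‖x‖ →
      a * ‖x‖ ^ q ≤ F x ∧ F x ≤ b * ‖x‖ ^ q)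
    (hgrad : ∀ x : Euc N, R₀ ≤ ‖x‖ → ‖Ψ x‖ ≤ C * ‖x‖ ^ (q - 1))
    (Energy : Euc N → ℝ)
    (hE : ∀ x, Energy x =
      -(1/2) * (inner ℝ (Ψ x) (W (Ψ x)) : ℝ) + (inner ℝ x (Ψ x) : ℝ) - F x) :
    Filter.Tendsto Energy (Filter.comap norm Filter.atTop) Filter.atTop := by
  have hnorm : Tendsto (norm : Euc N → ℝ) (comap norm atTop) atTop := tendsto_comap
  have hlarge : ∀ᶠ x in comap norm atTop, R₀ ≤ ‖x‖ := hnorm.eventually_ge_atTop R₀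
  obtain ⟨c, hc, hH⟩ := hconv.exists_eventually_mul_rpow_le_inner_sub hΨgrad ha hq1
    (hlarge.mono fun x hx => (hgrowth x hx).1) (hlarge.mono fun x hx => (hgrowth x hx).2)
  have hlim := (tendsto_mul_rpow_sub_mul_rpow_atTop (‖W‖ * C ^ 2 / 2) hc (by linarith)
    (by linarith : (q - 1) * 2 < q)).comp hnorm
  refine tendsto_atTop_mono' _ ?_ hlim
  filter_upwards [hH, hlarge] with x hHx hx
  have hQ := W.inner_apply_self_le_of_norm_le (hgrad x hx)
  rw [mul_pow, ← Real.rpow_mul_natCast (norm_nonneg x)] at hQ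
  rw [hE, Function.comp_apply]
  push_cast at hQ
  linarith

/-- for a convex `C¹` primitive `F` with `Θ(‖x‖^q)` growth, `1 < q < 2`,
and gradient bound `‖∇F x‖ ≤ C ‖x‖^{q-1}` for large `‖x‖`, the EBM energy
`E(x) = -(1/2)⟪Ψ x, W Ψ x⟫ + ⟪x, Ψ x⟫ - F x` (with `Ψ = ∇F`, `W` symmetric) is
radially unbounded: `E(x) → +∞` as `‖x‖ → ∞`. -/
theorem stmt_4 {N : ℕ}
    (F : Euc N → ℝ) (Ψ : Euc N → Euc N)
    (W : Euc N →L[ℝ] Euc N)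
    (hconv : ConvexOn ℝ Set.univ F)
    (hΨgrad : ∀ x, HasGradientAt F (Ψ x) x)
    (hΨcont : Continuous Ψ)
    (hWsymm : ∀ u v : Euc N, (inner ℝ (W u) v : ℝ) = inner ℝ u (W v))
    (a b C q : ℝ) (ha : 0 < a) (hb : 0 < b) (hC : 0 < C)
    (hq1 : 1 < q) (hq2 : q < 2)
    (R₀ : ℝ)
    (hgrowth : ∀ x : Euc N, R₀ ≤ ‖x‖ →
      a * ‖x‖ ^ q ≤ F x ∧ F x ≤ b * ‖x‖ ^ q)
    (hgrad : ∀ x : Euc N, R₀ ≤ ‖x‖ → ‖Ψ x‖ ≤ C * ‖x‖ ^ (q - 1))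
    (Energy : Euc N → ℝ)
    (hE : ∀ x, Energy x =
      -(1/2) * (inner ℝ (Ψ x) (W (Ψ x)) : ℝ) + (inner ℝ x (Ψ x) : ℝ) - F x) :
    Filter.Tendsto Energy (Filter.comap norm Filter.atTop) Filter.atTop :=
  stmt_4_general F Ψ W hconv hΨgrad a b C q ha hq1 hq2 R₀ hgrowth hgrad Energy hE
end

section
/- Let q ≥ 2 and N ≥ 1. There exist a convex C¹ function F : ℝ^N → ℝ with F(x) ~ Θ(‖x‖^q) and a symmetric matrix W with λ_max(W) > 0 and no zero entries such that the energy E(x) = -(1/2)∇F(x)ᵀW∇F(x) + xᵀ∇F(x) - F(x) is not radially unbounded, i.e., liminf_{‖x‖→∞} E(x) < +∞ (in fact E is unbounded below along some direction). -/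
open Real Filter Matrix
open scoped RealInnerProductSpace ComplexOrder

section InnerProductSpace

variable {E : Type*} [NormedAddCommGroup E] [InnerProductSpace ℝ E]

theorem convexOn_univ_norm_rpow {p : ℝ} (hp : 1 ≤ p) :
    ConvexOn ℝ Set.univ fun x : E => ‖x‖ ^ p := by
  refine ⟨convex_univ, fun x _ y _ a b ha hb hab => ?_⟩
  calc ‖a • x + b • y‖ ^ p ≤ (a * ‖x‖ + b * ‖y‖) ^ p := by
        refine rpow_le_rpow (norm_nonneg _) ?_ (by linarith)
        simpa [norm_smul, abs_of_nonneg ha, abs_of_nonneg hb] using norm_add_le (a • x) (b • y)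
    _ ≤ a • ‖x‖ ^ p + b • ‖y‖ ^ p :=
        (convexOn_rpow hp).2 (norm_nonneg x) (norm_nonneg y) ha hb hab

theorem hasGradientAt_norm_rpow_div [CompleteSpace E] (x : E) {p : ℝ} (hp : 1 < p) :
    HasGradientAt (fun x : E => ‖x‖ ^ p / p) (‖x‖ ^ (p - 2) • x) x := by
  simp_rw [hasGradientAt_iff_hasFDerivAt, div_eq_mul_inv]
  refine ((hasFDerivAt_norm_rpow x hp).mul_const p⁻¹).congr_fderiv ?_
  ext y
  have hp0 : p ≠ 0 := by positivity
  simp only [_root_.smul_apply, coe_innerSL_apply, smul_eq_mul, map_smul,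
    InnerProductSpace.toDual_apply_apply]
  field_simp

theorem norm_rpow_sub_two_smul_of_norm_eq_one {v : E} (hv : ‖v‖ = 1) (q : ℝ) {t : ℝ}
    (ht : 0 < t) : ‖t • v‖ ^ (q - 2) • (t • v) = t ^ (q - 1) • v := by
  rw [norm_smul, hv, mul_one, norm_of_nonneg ht.le, smul_smul, ← rpow_add_one ht.ne']
  ring_nf

noncomputable def energy (F : E → ℝ) (Ψ : E → E) (A : E →ₗ[ℝ] E) (x : E) : ℝ :=
  -(1 / 2) * ⟪Ψ x, A (Ψ x)⟫ + ⟪x, Ψ x⟫ - F x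

theorem energy_norm_rpow_smul {A : E →ₗ[ℝ] E} {v : E} {κ : ℝ} (hv : ‖v‖ = 1)
    (hAv : ⟪v, A v⟫ = κ) (q : ℝ) {t : ℝ} (ht : 0 < t) :
    energy (fun x => ‖x‖ ^ q / q) (fun x => ‖x‖ ^ (q - 2) • x) A (t • v) =
      -(κ / 2) * (t ^ (q - 1)) ^ 2 + (1 - 1 / q) * t ^ q := by
  have htq : t * t ^ (q - 1) = t ^ q := by
    rw [rpow_sub_one ht.ne']; field_simp
  simp only [energy]
  rw [norm_rpow_sub_two_smul_of_norm_eq_one hv q ht]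
  simp only [map_smul, real_inner_smul_left, real_inner_smul_right, hAv,
    real_inner_self_eq_norm_sq, hv, norm_smul, norm_of_nonneg ht.le, mul_one]
  rw [← htq]
  ring

theorem tendsto_energy_norm_rpow_smul_atBot {A : E →ₗ[ℝ] E} {v : E} {κ q : ℝ} (hv : ‖v‖ = 1)
    (hAv : ⟪v, A v⟫ = κ) (hκ : 2 ≤ κ) (hq : 2 ≤ q) :
    Tendsto (fun t : ℝ => energy (fun x => ‖x‖ ^ q / q) (fun x => ‖x‖ ^ (q - 2) • x) A (t • v))
      atTop atBot := by
  have hq0 : 0 < q := by linarith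
  refine tendsto_atBot_mono' _ ?_ (tendsto_neg_atTop_atBot.comp
    ((tendsto_rpow_atTop hq0).const_mul_atTop (one_div_pos.2 hq0)))
  filter_upwards [eventually_ge_atTop 1] with t ht
  rw [energy_norm_rpow_smul hv hAv q (by linarith)]
  have htq : t * t ^ (q - 1) = t ^ q := by
    rw [rpow_sub_one (by positivity)]; field_simp
  have hsq : t ^ q ≤ (t ^ (q - 1)) ^ 2 := by
    rw [← htq, sq]
    gcongr
    simpa using rpow_le_rpow_of_exponent_le ht (by linarith : (1 : ℝ) ≤ q - 1)
  have : 0 ≤ t ^ q := by positivity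
  simp only [Function.comp_apply]
  nlinarith

end InnerProductSpace

namespace Matrix

variable {n : Type*} [Fintype n]

theorem posSemidef_of_const {c : ℝ} (hc : 0 ≤ c) : (of fun _ _ : n => c).PosSemidef := by
  have hvec : (of fun _ _ : n => c) = c • vecMulVec 1 (star 1) := by
    ext
    simp [vecMulVec]
  rw [hvec]
  exact (posSemidef_vecMulVec_self_star 1).smul hc

theorem PosSemidef.exists_eigenvalues_pos {𝕜 : Type*} [RCLike 𝕜] [DecidableEq n]
    {A : Matrix n n 𝕜} (hA : A.PosSemidef) (h : A ≠ 0) : ∃ i, 0 < hA.isHermitian.eigenvalues i := by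
  by_contra! hle
  exact h <| hA.isHermitian.eigenvalues_eq_zero_iff.1 <|
    funext fun i => le_antisymm (hle i) (hA.eigenvalues_nonneg i)

end Matrix

/-- for any `q ≥ 2` and `N ≥ 1` there exist a convex `C¹` function
`F` with `Θ(‖x‖^q)` growth (gradient `Ψ`) and a symmetric matrix `W` with
`λ_max(W) > 0` and no zero entries, such that the EBM energy is not radially
unbounded: it is unbounded below along some direction. -/
theorem stmt_5 (N : ℕ) (hN : 1 ≤ N) (q : ℝ) (hq : 2 ≤ q) :
    ∃ (F : Euc N → ℝ) (Ψ : Euc N → Euc N)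
      (W : Matrix (Fin N) (Fin N) ℝ) (hW : W.IsHermitian),
      ConvexOn ℝ Set.univ F ∧
      (∀ x, HasGradientAt F (Ψ x) x) ∧ Continuous Ψ ∧
      (∃ a b : ℝ, 0 < a ∧ 0 < b ∧ ∃ R₀ : ℝ, ∀ x : Euc N,
        R₀ ≤ ‖x‖ → a * ‖x‖ ^ q ≤ F x ∧ F x ≤ b * ‖x‖ ^ q) ∧
      (∃ i, 0 < hW.eigenvalues i) ∧
      (∀ i j, W i j ≠ 0) ∧
      (∃ v : Euc N, v ≠ 0 ∧
        Filter.Tendsto (fun t : ℝ =>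
            -(1/2) * (inner ℝ (Ψ (t • v)) ((Matrix.toEuclideanLin W) (Ψ (t • v))) : ℝ)
              + (inner ℝ (t • v) (Ψ (t • v)) : ℝ) - F (t • v))
          Filter.atTop Filter.atBot) := by
  have hq0 : 0 < q := by linarith
  let i₀ : Fin N := ⟨0, hN⟩
  let W : Matrix (Fin N) (Fin N) ℝ := of fun _ _ => 2
  have hW : W.PosSemidef := posSemidef_of_const zero_le_two
  have hW0 : W ≠ 0 := fun h => by simpa [W] using congrFun (congrFun h i₀) i₀
  let v : Euc N := EuclideanSpace.single i₀ 1
  have hv : ‖v‖ = 1 := by simp [v]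
  have hWv : ⟪v, toEuclideanLin W v⟫ = 2 := by
    simp [v, W, EuclideanSpace.inner_single_left, toLpLin_apply]
  refine ⟨fun x => ‖x‖ ^ q / q, fun x => ‖x‖ ^ (q - 2) • x, W, hW.isHermitian,
    by simpa only [smul_eq_mul, div_eq_inv_mul] using
      (convexOn_univ_norm_rpow (by linarith)).smul (inv_nonneg.2 hq0.le),
    fun x => hasGradientAt_norm_rpow_div x (by linarith),
    (continuous_norm.rpow_const fun _ => .inr (by linarith)).smul continuous_id,
    ⟨1 / q, 1 / q, by positivity, by positivity, 0, fun x _ =>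
      ⟨(one_div_mul_eq_div _ _).le, (one_div_mul_eq_div _ _).ge⟩⟩,
    hW.exists_eigenvalues_pos hW0, fun _ _ => two_ne_zero,
    ⟨v, by simp [← norm_ne_zero_iff, hv], tendsto_energy_norm_rpow_smul_atBot hv hWv le_rfl hq⟩⟩
end

section
/- Let f : ℝ^N → ℝ^N be locally Lipschitz, r > 0, and suppose xᵀf(x) < 0 for all x with ‖x‖ ≥ r, with the strengthened property that for each R > r there exists γ_R > 0 with xᵀf(x) ≤ -γ_R for all ‖x‖ = R. Then for every initial condition x₀ ∈ ℝ^N, the solution x(t) of ẋ = f(x) satisfies limsup_{t→∞} ‖x(t)‖ ≤ r. -/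
open Filter Set

section

variable {E : Type*} [NormedAddCommGroup E] [InnerProductSpace ℝ E] {f : E → E} {x : ℝ → E}

theorem norm_le_of_le_of_inner_neg_on_sphere (hsol : ∀ t, 0 ≤ t → HasDerivAt x (f (x t)) t)
    {ρ : ℝ} (hρ : ∀ y, ‖y‖ = ρ → inner ℝ y (f y) < 0) {t₀ t : ℝ} (ht₀ : 0 ≤ t₀)
    (h₀ : ‖x t₀‖ ≤ ρ) (ht : t₀ ≤ t) : ‖x t‖ ≤ ρ := by
  have hρ0 : 0 ≤ ρ := (norm_nonneg _).trans h₀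
  have hV : ∀ s ∈ Icc t₀ t, HasDerivAt (‖x ·‖ ^ 2) (2 * inner ℝ (x s) (f (x s))) s :=
    fun s hs => (hsol s (ht₀.trans hs.1)).norm_sq
  have hsq : ‖x t‖ ^ 2 ≤ ρ ^ 2 :=
    image_le_of_deriv_right_lt_deriv_boundary (B := fun _ => ρ ^ 2) (B' := fun _ => 0)
      (fun s hs => (hV s hs).continuousAt.continuousWithinAt)
      (fun s hs => (hV s (Ico_subset_Icc_self hs)).hasDerivWithinAt) (by gcongr)
      (fun _ => hasDerivAt_const _ _)
      (fun s _ hs => by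
        have := hρ (x s) ((sq_eq_sq₀ (norm_nonneg _) hρ0).1 hs)
        linarith)
      ⟨ht, le_rfl⟩
  exact (pow_le_pow_iff_left₀ (norm_nonneg _) hρ0 two_ne_zero).1 hsq

theorem norm_sq_le_of_inner_le (hsol : ∀ t, 0 ≤ t → HasDerivAt x (f (x t)) t) {c : ℝ}
    (hc : ∀ t, 0 ≤ t → inner ℝ (x t) (f (x t)) ≤ -c) {t : ℝ} (ht : 0 ≤ t) :
    ‖x t‖ ^ 2 ≤ ‖x 0‖ ^ 2 - 2 * c * t := by
  have hV : ∀ s ∈ Icc 0 t, HasDerivAt (‖x ·‖ ^ 2) (2 * inner ℝ (x s) (f (x s))) s :=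
    fun s hs => (hsol s hs.1).norm_sq
  refine image_le_of_deriv_right_le_deriv_boundary (B := fun s => ‖x 0‖ ^ 2 - 2 * c * s)
    (B' := fun _ => -(2 * c)) (fun s hs => (hV s hs).continuousAt.continuousWithinAt)
    (fun s hs => (hV s (Ico_subset_Icc_self hs)).hasDerivWithinAt) (by simp)
    (by fun_prop) (fun s _ => ?_) (fun s hs => ?_) ⟨ht, le_rfl⟩
  · simpa using ((hasDerivAt_id s).const_mul (2 * c)).const_sub (‖x 0‖ ^ 2) |>.hasDerivWithinAt
  · linarith [hc s hs.1]

variable [ProperSpace E] {r : ℝ}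

theorem exists_norm_le_of_inner_neg (hf : Continuous f)
    (hsol : ∀ t, 0 ≤ t → HasDerivAt x (f (x t)) t)
    (hneg : ∀ y, r ≤ ‖y‖ → inner ℝ y (f y) < 0) : ∃ t₀, 0 ≤ t₀ ∧ ‖x t₀‖ ≤ r := by
  by_contra! hfar
  set K : Set E := {y | r ≤ ‖y‖ ∧ ‖y‖ ≤ ‖x 0‖}
  have hK : ∀ t, 0 ≤ t → x t ∈ K := fun t ht =>
    ⟨(hfar t ht).le, norm_le_of_le_of_inner_neg_on_sphere hsol
      (fun y hy => hneg y (hy ▸ (hfar 0 le_rfl).le)) le_rfl le_rfl ht⟩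
  have hKc : IsCompact K :=
    (isCompact_closedBall 0 ‖x 0‖).of_isClosed_subset
      ((isClosed_le continuous_const continuous_norm).inter
        (isClosed_le continuous_norm continuous_const))
      (fun y hy => mem_closedBall_zero_iff.2 hy.2)
  obtain ⟨y₀, hy₀, hmax⟩ :=
    hKc.exists_isMaxOn ⟨x 0, hK 0 le_rfl⟩ (continuous_id.inner (𝕜 := ℝ) hf).continuousOn
  set c := -inner ℝ y₀ (f y₀)
  have hc : 0 < c := neg_pos.2 (hneg y₀ hy₀.1)
  set T := ‖x 0‖ ^ 2 / (2 * c) + 1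
  have hdecay : ‖x T‖ ^ 2 ≤ ‖x 0‖ ^ 2 - 2 * c * T :=
    norm_sq_le_of_inner_le hsol (fun t ht => by simpa [c] using hmax (hK t ht)) (by positivity)
  have hT : 2 * c * T = ‖x 0‖ ^ 2 + 2 * c := by simp only [T]; field_simp
  linarith [sq_nonneg ‖x T‖]

end

theorem stmt_15_general {N : ℕ}
    (f : Euc N → Euc N) (hLip : LocallyLipschitz f)
    (r : ℝ)
    (hneg : ∀ x : Euc N, r ≤ ‖x‖ → (inner ℝ x (f x) : ℝ) < 0)
    (x : ℝ → Euc N)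
    (hsol : ∀ t, 0 ≤ t → HasDerivAt x (f (x t)) t) :
    Filter.limsup (fun t => ‖x t‖) Filter.atTop ≤ r := by
  obtain ⟨t₀, ht₀, hx₀⟩ := exists_norm_le_of_inner_neg hLip.continuous hsol hneg
  have hev : ∀ᶠ t in atTop, ‖x t‖ ≤ r := (eventually_ge_atTop t₀).mono fun t ht =>
    norm_le_of_le_of_inner_neg_on_sphere hsol (fun y hy => hneg y hy.ge) ht₀ hx₀ ht
  exact limsup_le_of_le (isCoboundedUnder_le_of_le atTop fun t => norm_nonneg (x t)) hev

/-- absorption into the ball `B̄_r(0)`: if `⟪x, f x⟫ < 0` for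
`‖x‖ ≥ r` and the radial derivative is uniformly negative (`≤ -γ_R`) on each
sphere of radius `R > r`, then every solution of `ẋ = f(x)` satisfies
`limsup_{t→∞} ‖x(t)‖ ≤ r`. -/
theorem stmt_15 {N : ℕ}
    (f : Euc N → Euc N) (hLip : LocallyLipschitz f)
    (r : ℝ) (hr : 0 < r)
    (hneg : ∀ x : Euc N, r ≤ ‖x‖ → (inner ℝ x (f x) : ℝ) < 0)
    (hunif : ∀ R : ℝ, r < R → ∃ γ : ℝ, 0 < γ ∧
      ∀ x : Euc N, ‖x‖ = R → (inner ℝ x (f x) : ℝ) ≤ -γ)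
    (x : ℝ → Euc N)
    (hsol : ∀ t, 0 ≤ t → HasDerivAt x (f (x t)) t) :
    Filter.limsup (fun t => ‖x t‖) Filter.atTop ≤ r :=
  stmt_15_general f hLip r hneg x hsol
end
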